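/- arXiv:1111.4880 — 2 statements merged into one kernel-verified Lean document; each statement's English description precedes it below -/
import Mathlib

section
/- For all natural numbers k and v and all real numbers x and t, the v-th derivative with respect to t of the generating function f_{B,k}(x,t) = t^k x^k e^{(1-x)t}/k! satisfies ∂^v f_{B,k}(x,t)/∂t^v = ∑_{j=0}^v B_j^v(x) f_{B,k-j}(x,t), where the terms with j > k are taken to be 0. -/
/-- Bernstein basis function `B_k^n(x) = C(n,k) x^k (1-x)^(n-k)`;
by convention it is `0` when `k > n` since then `C(n,k) = 0`. -/
def bern (n k : ℕ) (x : ℝ) : ℝ := (n.choose k : ℝ) * x ^ k * (1 - x) ^ (n - k)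

/-- Generating function for the Bernstein basis functions:
`f_{B,k}(x,t) = t^k x^k e^((1-x)t) / k!`. -/
noncomputable def bernGen (k : ℕ) (x t : ℝ) : ℝ :=
  t ^ k * x ^ k * Real.exp ((1 - x) * t) / (Nat.factorial k : ℝ)

/-! Writing `f_{B,k}(x,t) = (xt)^k/k! · e^{(1-x)t}`, the Leibniz rule gives the sum at once: the
`j`-th `t`-derivative of `(xt)^k/k!` is `x^j (xt)^(k-j)/(k-j)!` (zero for `j > k`), and the
`(v-j)`-th of the exponential is `(1-x)^(v-j) e^{(1-x)t}`. -/

open Nat in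
theorem iteratedDeriv_pow_div_factorial {𝕜 : Type*} [NontriviallyNormedField 𝕜] [CharZero 𝕜]
    (k j : ℕ) (u : 𝕜) :
    iteratedDeriv j (fun u : 𝕜 => u ^ k / (k ! : 𝕜)) u =
      if j ≤ k then u ^ (k - j) / ((k - j)! : 𝕜) else 0 := by
  rw [iteratedDeriv_div_const, iteratedDeriv_pow]
  split_ifs with hjk
  · have hk : ((k - j)! * k.descFactorial j : 𝕜) = k ! := by
      exact_mod_cast factorial_mul_descFactorial hjk
    have hd : (k.descFactorial j : 𝕜) ≠ 0 := by
      exact_mod_cast (descFactorial_pos.mpr hjk).ne'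
    rw [← hk]
    field_simp
  · simp [descFactorial_eq_zero_iff_lt.mpr (not_le.mp hjk)]

theorem bernGen_eq_mul_exp (k : ℕ) (x t : ℝ) :
    bernGen k x t = (x * t) ^ k / (k.factorial : ℝ) * Real.exp ((1 - x) * t) := by
  rw [bernGen, mul_pow]
  ring

theorem iteratedDeriv_bernGen_t (k v : ℕ) (x t : ℝ) :
    iteratedDeriv v (fun s : ℝ => bernGen k x s) t =
      ∑ j ∈ Finset.range (v + 1),
        bern v j x * (if j ≤ k then bernGen (k - j) x t else 0) := by
  have hpoly : ContDiff ℝ v (fun s : ℝ => (x * s) ^ k / (k.factorial : ℝ)) := by fun_prop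
  have hexp : ContDiff ℝ v (fun s : ℝ => Real.exp ((1 - x) * s)) := by fun_prop
  simp_rw [bernGen_eq_mul_exp]
  rw [iteratedDeriv_fun_mul hpoly.contDiffAt hexp.contDiffAt]
  refine Finset.sum_congr rfl fun j _ => ?_
  rw [iteratedDeriv_comp_const_mul (f := fun u : ℝ => u ^ k / (k.factorial : ℝ)) (by fun_prop)]
  dsimp only
  rw [iteratedDeriv_pow_div_factorial, iteratedDeriv_exp_const_mul]
  split_ifs <;> simp only [bern] <;> ring
end

section
/- For all natural numbers k and n with n ≥ 2k and all real numbers x and y, ∑_{j=0}^n C(n,j) (-1)^{n-j} B_k^j(x) B_k^{n-j}(y) = ((n)_{2k}/(k!)^2) (-xy)^k (y-x)^{n-2k}, where (n)_{2k} = n(n-1)⋯(n-2k+1) denotes the falling factorial (with (n)_0 = 1). -/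
open Nat

lemma bern_eq_zero_of_lt {n k : ℕ} (h : n < k) (x : ℝ) : bern n k x = 0 := by
  simp [bern, Nat.choose_eq_zero_of_lt h]

lemma cast_choose_mul_choose_mul_choose (K : Type*) [Field K] [CharZero K] (k i l : ℕ) :
    ((2 * k + (i + l)).choose (k + i) * (k + i).choose k * (k + l).choose k : K) =
      (2 * k + (i + l)).descFactorial (2 * k) / (k ! : K) ^ 2 * (i + l).choose i := by
  have hdesc : ((2 * k + (i + l)).descFactorial (2 * k) : K) = (2 * k + (i + l))! / (i + l)! := by
    rw [eq_div_iff (Nat.cast_ne_zero.mpr (factorial_ne_zero _)), mul_comm]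
    exact_mod_cast Nat.add_sub_cancel_left (2 * k) (i + l) ▸
      Nat.factorial_mul_descFactorial (le_add_right _ _)
  rw [hdesc, show 2 * k + (i + l) = (k + i) + (k + l) by ring, Nat.cast_add_choose,
    Nat.cast_add_choose, Nat.cast_add_choose, Nat.cast_add_choose]
  field_simp [Nat.factorial_ne_zero]

lemma choose_mul_bern_mul_bern (k i l : ℕ) (x y : ℝ) :
    ((2 * k + (i + l)).choose (k + i) : ℝ) * (-1) ^ (2 * k + (i + l) - (k + i)) *
        bern (k + i) k x * bern (2 * k + (i + l) - (k + i)) k y =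
      (2 * k + (i + l)).descFactorial (2 * k) / (k ! : ℝ) ^ 2 * (-(x * y)) ^ k *
        ((1 - x) ^ i * (y - 1) ^ l * (i + l).choose i) := by
  have hsub : 2 * k + (i + l) - (k + i) = k + l := by omega
  simp only [hsub, bern, Nat.add_sub_cancel_left]
  rw [pow_add, neg_pow (x * y), show y - 1 = -(1 - y) by ring, neg_pow (1 - y)]
  linear_combination ((-1) ^ k * (-1) ^ l * x ^ k * y ^ k * (1 - x) ^ i * (1 - y) ^ l) *
    cast_choose_mul_choose_mul_choose ℝ k i l

theorem bern_alternating_product_sum (n k : ℕ) (hk : 2 * k ≤ n) (x y : ℝ) :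
    ∑ j ∈ Finset.range (n + 1),
        (n.choose j : ℝ) * (-1 : ℝ) ^ (n - j) * bern j k x * bern (n - j) k y =
      ((n.descFactorial (2 * k) : ℝ) / ((Nat.factorial k : ℝ)) ^ 2) *
        (-(x * y)) ^ k * (y - x) ^ (n - 2 * k) := by
  obtain ⟨m, rfl⟩ := Nat.exists_eq_add_of_le hk
  rw [Nat.add_sub_cancel_left, show 2 * k + m + 1 = k + (m + 1) + k by ring,
    Finset.sum_range_add, Finset.sum_range_add, show y - x = (1 - x) + (y - 1) by ring, add_pow,
    Finset.mul_sum]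
  have hlow : ∀ j ∈ Finset.range k, (2 * k + m).choose j * (-1 : ℝ) ^ (2 * k + m - j) *
      bern j k x * bern (2 * k + m - j) k y = 0 := fun j hj => by
    rw [bern_eq_zero_of_lt (Finset.mem_range.mp hj), mul_zero, zero_mul]
  have hhigh : ∀ j ∈ Finset.range k, (2 * k + m).choose (k + (m + 1) + j) *
      (-1 : ℝ) ^ (2 * k + m - (k + (m + 1) + j)) * bern (k + (m + 1) + j) k x *
      bern (2 * k + m - (k + (m + 1) + j)) k y = 0 := fun j hj => by
    rw [bern_eq_zero_of_lt (by have := Finset.mem_range.mp hj; omega) y, mul_zero]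
  rw [Finset.sum_eq_zero hlow, Finset.sum_eq_zero hhigh, zero_add, add_zero]
  refine Finset.sum_congr rfl fun i hi => ?_
  obtain ⟨l, rfl⟩ := Nat.exists_eq_add_of_le (Finset.mem_range_succ_iff.mp hi)
  rw [choose_mul_bern_mul_bern, Nat.add_sub_cancel_left]
end
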